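/- arXiv:2209.11912 — 3 statements merged into one kernel-verified Lean document; each statement's English description precedes it below -/
import Mathlib

section
/- Suppose the pair (G, A) has the falsification by fellow traveler property with constant k and A is totally ordered. If u ∈ A* represents g ∈ G and u is not the short reverse lexicographic normal form of g, then there exists a word v with v =_G u, v <_srev u, and u and v 2k-fellow travel. -/
/-- The group element represented by a word over the generating set. -/
def evalWord {A : Type*} {G : Type*} [Group G] (π : A → G) (w : List A) : G :=
  (w.map π).prod

/-- The distance in the Cayley graph of `G` with respect to the generators `π`
between `g` and `h` is at most `k`. -/
def distLE {A : Type*} {G : Type*} [Group G] (π : A → G) (g h : G) (k : ℕ) : Prop :=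
  ∃ w : List A, w.length ≤ k ∧ g * evalWord π w = h

/-- Words `u` and `v` `k`-fellow travel. -/
def FellowTravel {A : Type*} {G : Type*} [Group G] (π : A → G) (k : ℕ)
    (u v : List A) : Prop :=
  ∀ n : ℕ, distLE π (evalWord π (u.take n)) (evalWord π (v.take n)) k

/-- The word length of a group element with respect to the generators `π`. -/
noncomputable def wordLength {A : Type*} {G : Type*} [Group G] (π : A → G) (g : G) : ℕ :=
  sInf {n : ℕ | ∃ w : List A, w.length = n ∧ evalWord π w = g}

/-- A word is geodesic if its length is the word length of the element it
represents. -/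
def IsGeodesic {A : Type*} {G : Type*} [Group G] (π : A → G) (u : List A) : Prop :=
  u.length = wordLength π (evalWord π u)

/-- The falsification by fellow traveler property with constant `k`: every
non-geodesic word has a strictly shorter `k`-fellow-traveling witness. -/
def FFTP {A : Type*} {G : Type*} [Group G] (π : A → G) (k : ℕ) : Prop :=
  ∀ u : List A, ¬ IsGeodesic π u →
    ∃ v : List A, v.length < u.length ∧ evalWord π v = evalWord π u ∧
      FellowTravel π k u v

/-- The short reverse lexicographic order. -/
def srevLt {A : Type*} [LinearOrder A] (u v : List A) : Prop :=
  u.length < v.length ∨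
    (u.length = v.length ∧ List.Lex (· < ·) u.reverse v.reverse)

/-!
If `u` is not geodesic, a single FFTP witness is shorter, hence `<_srev u`. If `u` is geodesic,
a word `v <_srev u` representing the same element has the same length, so `u = u₁ a s` and
`v = v₁ b s` with `b < a` and `|u₁| = |v₁|`. Since `u₁ a` is geodesic, so are `v₁ b` and `v₁`,
and the word `u₁ a b⁻¹`, which represents `v₁`, is two letters too long. Two rounds of FFTP
shorten it to a geodesic `w` which `2k`-fellow travels `u₁ a b⁻¹`, hence `u₁`; the word `w b s`
is then `<_srev u`, and it fellow travels `u` because `u₁ a` and `w b` agree in `G`.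
-/

lemma List.Lex.exists_eq_append_cons {α : Type*} {r : α → α → Prop} :
    ∀ {x y : List α}, List.Lex r x y → x.length = y.length →
      ∃ (p q₁ q₂ : List α) (b a : α),
        x = p ++ b :: q₁ ∧ y = p ++ a :: q₂ ∧ r b a ∧ q₁.length = q₂.length
  | _, _, .nil, hl => by simp at hl
  | _, _, .rel hr, hl => ⟨[], _, _, _, _, rfl, rfl, hr, by simpa using hl⟩
  | _, _, .cons (a := c) h, hl => by
    obtain ⟨p, q₁, q₂, b, a, rfl, rfl, hr, hq⟩ := h.exists_eq_append_cons (by simpa using hl)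
    exact ⟨c :: p, q₁, q₂, b, a, rfl, rfl, hr, hq⟩

section Srev

variable {A : Type*} [LinearOrder A]

lemma srevLt_append_cons {v₁ u₁ s : List A} {b a : A} (hba : b < a)
    (hlen : v₁.length = u₁.length) : srevLt (v₁ ++ b :: s) (u₁ ++ a :: s) := by
  refine Or.inr ⟨by simp [hlen], ?_⟩
  simpa using (List.Lex.rel hba).append_left (· < ·) s.reverse

lemma srevLt.exists_eq_append_cons {v u : List A} (h : srevLt v u)
    (hlen : v.length = u.length) :
    ∃ (v₁ u₁ s : List A) (b a : A),
      v = v₁ ++ b :: s ∧ u = u₁ ++ a :: s ∧ b < a ∧ v₁.length = u₁.length := by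
  obtain ⟨-, hlex⟩ := h.resolve_left (by omega)
  obtain ⟨p, q₁, q₂, b, a, hv, hu, hba, hq⟩ := hlex.exists_eq_append_cons (by simpa using hlen)
  refine ⟨q₁.reverse, q₂.reverse, p.reverse, b, a, ?_, ?_, hba, by simpa using hq⟩
  · simpa using congrArg List.reverse hv
  · simpa using congrArg List.reverse hu

end Srev

section Words

variable {A G : Type*} [Group G] (π : A → G)

@[simp]
lemma evalWord_nil : evalWord π [] = 1 := rfl

@[simp]
lemma evalWord_cons (a : A) (u : List A) : evalWord π (a :: u) = π a * evalWord π u := by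
  simp [evalWord]

@[simp]
lemma evalWord_append (u v : List A) : evalWord π (u ++ v) = evalWord π u * evalWord π v := by
  simp [evalWord]

variable {π}

lemma distLE_of_eq {g h : G} (hgh : g = h) (k : ℕ) : distLE π g h k :=
  ⟨[], Nat.zero_le k, by simp [hgh]⟩

lemma distLE.mono {g h : G} {k l : ℕ} (hd : distLE π g h k) (hkl : k ≤ l) : distLE π g h l :=
  let ⟨w, hw, he⟩ := hd
  ⟨w, hw.trans hkl, he⟩

lemma distLE.trans {g h j : G} {k l : ℕ} (hgh : distLE π g h k) (hhj : distLE π h j l) :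
    distLE π g j (k + l) := by
  obtain ⟨w₁, hw₁, rfl⟩ := hgh
  obtain ⟨w₂, hw₂, rfl⟩ := hhj
  exact ⟨w₁ ++ w₂, by simp only [List.length_append]; omega, by simp [mul_assoc]⟩

lemma FellowTravel.refl (u : List A) : FellowTravel π 0 u u :=
  fun _ => distLE_of_eq rfl 0

lemma FellowTravel.mono {k l : ℕ} {u v : List A} (h : FellowTravel π k u v) (hkl : k ≤ l) :
    FellowTravel π l u v :=
  fun n => (h n).mono hkl

lemma FellowTravel.trans {k l : ℕ} {u v w : List A} (huv : FellowTravel π k u v)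
    (hvw : FellowTravel π l v w) : FellowTravel π (k + l) u w :=
  fun n => (huv n).trans (hvw n)

lemma FellowTravel.take {k : ℕ} {u v : List A} (h : FellowTravel π k u v) (m : ℕ) :
    FellowTravel π k (u.take m) (v.take m) := by
  intro n
  simpa only [List.take_take] using h (min n m)

lemma FellowTravel.append_cons {k : ℕ} {p q s : List A} {a b : A} (h : FellowTravel π k p q)
    (hlen : p.length = q.length) (heq : evalWord π p * π a = evalWord π q * π b) :
    FellowTravel π k (p ++ a :: s) (q ++ b :: s) := by
  intro n
  rcases le_or_gt n p.length with hn | hn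
  · simpa [List.take_append, Nat.sub_eq_zero_of_le hn, hlen ▸ hn] using h n
  · obtain ⟨m, rfl⟩ : ∃ m, n = p.length + (m + 1) := ⟨n - p.length - 1, by omega⟩
    have hp : (p ++ a :: s).take (p.length + (m + 1)) = p ++ a :: s.take m := by
      simp [List.take_append]
    have hq : (q ++ b :: s).take (p.length + (m + 1)) = q ++ b :: s.take m := by
      simp [List.take_append, hlen]
    apply distLE_of_eq
    simp [hp, hq, ← mul_assoc, heq]

lemma wordLength_le_length (w : List A) : wordLength π (evalWord π w) ≤ w.length :=
  Nat.sInf_le ⟨w, rfl, rfl⟩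

lemma exists_length_eq_wordLength (w : List A) :
    ∃ w' : List A, w'.length = wordLength π (evalWord π w) ∧ evalWord π w' = evalWord π w :=
  Nat.sInf_mem (s := {n | ∃ w' : List A, w'.length = n ∧ evalWord π w' = evalWord π w})
    ⟨w.length, w, rfl, rfl⟩

lemma IsGeodesic.length_le {u v : List A} (hu : IsGeodesic π u)
    (huv : evalWord π v = evalWord π u) : u.length ≤ v.length := by
  rw [hu, ← huv]
  exact wordLength_le_length v

lemma IsGeodesic.of_length_le {u v : List A} (hu : IsGeodesic π u)
    (huv : evalWord π v = evalWord π u) (hlen : v.length ≤ u.length) : IsGeodesic π v := by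
  have := hu.length_le huv
  unfold IsGeodesic at hu ⊢
  rw [huv]
  omega

lemma IsGeodesic.of_append_left {p s : List A} (h : IsGeodesic π (p ++ s)) :
    IsGeodesic π p := by
  obtain ⟨w, hwl, hwe⟩ := exists_length_eq_wordLength (π := π) p
  have hle := h.length_le (v := w ++ s) (by simp [hwe])
  have := wordLength_le_length (π := π) p
  simp only [List.length_append] at hle
  unfold IsGeodesic
  omega

lemma FFTP.exists_isGeodesic_fellowTravel {k : ℕ} (hfftp : FFTP π k) :
    ∀ (m : ℕ) (z : List A), z.length ≤ wordLength π (evalWord π z) + m →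
      ∃ w : List A, IsGeodesic π w ∧ evalWord π w = evalWord π z ∧ FellowTravel π (m * k) z w
  | 0, z, hz =>
    ⟨z, le_antisymm hz (wordLength_le_length z), rfl, (FellowTravel.refl z).mono (Nat.zero_le _)⟩
  | m + 1, z, hz => by
    by_cases hgeo : IsGeodesic π z
    · exact ⟨z, hgeo, rfl, (FellowTravel.refl z).mono (Nat.zero_le _)⟩
    obtain ⟨z', hlt, heq, hft⟩ := hfftp z hgeo
    obtain ⟨w, hw, hwe, hft'⟩ :=
      hfftp.exists_isGeodesic_fellowTravel m z' (by rw [heq]; omega)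
    exact ⟨w, hw, hwe.trans heq, by simpa [add_mul, add_comm] using hft.trans hft'⟩

lemma exists_fellowTravel_of_isGeodesic_append_cons (hinv : ∀ a : A, ∃ b : A, π b = (π a)⁻¹)
    {k : ℕ} (hfftp : FFTP π k) {u₁ v₁ s : List A} {a b : A}
    (hu : IsGeodesic π (u₁ ++ a :: s)) (hlen : v₁.length = u₁.length)
    (heq : evalWord π v₁ * π b = evalWord π u₁ * π a) :
    ∃ w : List A, w.length = u₁.length ∧ evalWord π w * π b = evalWord π u₁ * π a ∧
      FellowTravel π (2 * k) u₁ w := by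
  have hua : IsGeodesic π (u₁ ++ [a]) := IsGeodesic.of_append_left (s := s) (by simpa using hu)
  have hv : IsGeodesic π v₁ :=
    (hua.of_length_le (v := v₁ ++ [b]) (by simpa using heq) (by simp [hlen])).of_append_left
  obtain ⟨c, hc⟩ := hinv b
  have hz : evalWord π (u₁ ++ [a, c]) = evalWord π v₁ := by
    simp [hc, ← mul_assoc, ← heq]
  obtain ⟨w, hw, hwe, hft⟩ :=
    hfftp.exists_isGeodesic_fellowTravel 2 (u₁ ++ [a, c]) (by rw [hz, ← hv]; simp [hlen])
  have hwlen : w.length = u₁.length :=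
    hlen ▸ le_antisymm (hw.length_le (hwe.trans hz).symm) (hv.length_le (hwe.trans hz))
  refine ⟨w, hwlen, by rw [hwe, hz, heq], ?_⟩
  simpa [mul_comm, List.take_of_length_le hwlen.le] using hft.take u₁.length

end Words

theorem fftp_srev_witness_general {A : Type*} {G : Type*} [Group G]
    [LinearOrder A] (π : A → G)
    (hinv : ∀ a : A, ∃ b : A, π b = (π a)⁻¹)
    (k : ℕ) (hfftp : FFTP π k) (u : List A)
    (hnf : ∃ v : List A, evalWord π v = evalWord π u ∧ srevLt v u) :
    ∃ v : List A, evalWord π v = evalWord π u ∧ srevLt v u ∧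
      FellowTravel π (2 * k) u v := by
  by_cases hgeo : IsGeodesic π u
  · obtain ⟨v, hveq, hlt⟩ := hnf
    have hlen : v.length = u.length := by
      rcases hlt with hlt | ⟨hlen, -⟩
      · exact absurd (hgeo.length_le hveq) (by omega)
      · exact hlen
    obtain ⟨v₁, u₁, s, b, a, rfl, rfl, hba, hlen₁⟩ := hlt.exists_eq_append_cons hlen
    obtain ⟨w, hwlen, hweq, hft⟩ := exists_fellowTravel_of_isGeodesic_append_cons hinv hfftp
      hgeo hlen₁ (mul_right_cancel (by simpa [mul_assoc] using hveq))
    refine ⟨w ++ b :: s, ?_, srevLt_append_cons hba hwlen, hft.append_cons hwlen.symm hweq.symm⟩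
    simp only [evalWord_append, evalWord_cons, ← mul_assoc, hweq]
  · obtain ⟨v, hlt, heq, hft⟩ := hfftp u hgeo
    exact ⟨v, heq, Or.inl hlt, hft.mono (by omega)⟩

/-- Lemma: if `(G, A)` has FFTP with constant `k` and `u` is not the short
reverse lexicographic normal form of the element it represents, then there is
a word `v` representing the same element with `v <_srev u` such that `u` and
`v` `2k`-fellow travel. -/
theorem fftp_srev_witness {A : Type*} {G : Type*} [Group G] [Fintype A]
    [LinearOrder A] (π : A → G)
    (hgen : ∀ g : G, ∃ w : List A, evalWord π w = g)
    (hinv : ∀ a : A, ∃ b : A, π b = (π a)⁻¹)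
    (k : ℕ) (hfftp : FFTP π k) (u : List A)
    (hnf : ∃ v : List A, evalWord π v = evalWord π u ∧ srevLt v u) :
    ∃ v : List A, evalWord π v = evalWord π u ∧ srevLt v u ∧
      FellowTravel π (2 * k) u v :=
  fftp_srev_witness_general π hinv k hfftp u hnf
end

section
/- Restriction of a convergent prefix-rewriting system to minimally reducible left-hand sides preserves the normal form set: if R is a convergent prefix-rewriting system for a group G over alphabet A with normal form set N (the irreducible words), and R' = {(u, v) ∈ R : u = wl with w ∈ N and l ∈ A}, then R' is also a convergent prefix-rewriting system for G and the set of R'-irreducible words equals N. -/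
/-- One step of prefix-rewriting: `u ++ w →_R v ++ w` for `(u, v) ∈ R`. -/
def RwStep {A : Type*} (R : Set (List A × List A)) (x y : List A) : Prop :=
  ∃ p ∈ R, ∃ w : List A, x = p.1 ++ w ∧ y = p.2 ++ w

/-- A word is irreducible if no prefix-rewriting applies to it. -/
def Irred {A : Type*} (R : Set (List A × List A)) (x : List A) : Prop :=
  ¬ ∃ y : List A, RwStep R x y

/-! A rule of `R` whose left-hand side is not minimally reducible has a proper prefix that is
reducible, hence (by induction on its length) a prefix that is the left-hand side of a rule
with minimally reducible left-hand side. So both systems reduce the same words, and the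
restricted one inherits termination and the normal forms from `R`. -/

section PrefixRewriting

variable {A : Type*} {R R' : Set (List A × List A)}

def minimalRules (R : Set (List A × List A)) : Set (List A × List A) :=
  {p ∈ R | ∃ (w : List A) (l : A), p.1 = w ++ [l] ∧ Irred R w}

theorem minimalRules_subset : minimalRules R ⊆ R := fun _ hp => hp.1

theorem irred_iff_forall_not_prefix {x : List A} : Irred R x ↔ ∀ p ∈ R, ¬ p.1 <+: x := by
  simp only [Irred, RwStep, List.IsPrefix]
  constructor
  · rintro h p hp ⟨w, rfl⟩
    exact h ⟨p.2 ++ w, p, hp, w, rfl, rfl⟩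
  · rintro h ⟨_, p, hp, w, rfl, -⟩
    exact h p hp ⟨w, rfl⟩

theorem RwStep.mono (hR : R' ⊆ R) {x y : List A} : RwStep R' x y → RwStep R x y :=
  fun ⟨p, hp, w, hx, hy⟩ => ⟨p, hR hp, w, hx, hy⟩

theorem Irred.anti (hR : R' ⊆ R) {x : List A} (hx : Irred R x) : Irred R' x :=
  fun ⟨y, hxy⟩ => hx ⟨y, hxy.mono hR⟩

theorem fst_ne_nil_of_irred {w : List A} (hw : Irred R w) : ∀ p ∈ R, p.1 ≠ [] := by
  intro p hp hnil
  exact irred_iff_forall_not_prefix.mp hw p hp (hnil ▸ List.nil_prefix)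

theorem exists_minimalRules_prefix (hne : ∀ p ∈ R, p.1 ≠ []) :
    ∀ p ∈ R, ∃ q ∈ minimalRules R, q.1 <+: p.1 := by
  intro p hp
  induction hlen : p.1.length using Nat.strong_induction_on generalizing p with
  | _ n ih =>
    obtain ⟨u, l, hul⟩ := (List.eq_nil_or_concat' p.1).resolve_left (hne p hp)
    by_cases hu : Irred R u
    · exact ⟨p, ⟨hp, u, l, hul, hu⟩, List.prefix_refl _⟩
    obtain ⟨r, hr, hru⟩ : ∃ r ∈ R, r.1 <+: u := by
      simpa [irred_iff_forall_not_prefix] using hu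
    have hshorter : r.1.length < n := by
      have := hru.length_le
      rw [← hlen, hul, List.length_append, List.length_singleton]
      omega
    obtain ⟨q, hq, hqr⟩ := ih _ hshorter r hr rfl
    exact ⟨q, hq, hqr.trans (hul ▸ hru.trans (List.prefix_append _ _))⟩

theorem irred_minimalRules_iff (hne : ∀ p ∈ R, p.1 ≠ []) {x : List A} :
    Irred (minimalRules R) x ↔ Irred R x := by
  refine ⟨fun hx => irred_iff_forall_not_prefix.mpr fun p hp hpx => ?_,
    Irred.anti minimalRules_subset⟩
  obtain ⟨q, hq, hqp⟩ := exists_minimalRules_prefix hne p hp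
  exact irred_iff_forall_not_prefix.mp hx q hq (hqp.trans hpx)

end PrefixRewriting

theorem cprs_restrict_minimally_reducible_general {A : Type*} {G : Type*} [Group G]
    (π : A → G) (R : Set (List A × List A))
    (hrel : ∀ p ∈ R, evalWord π p.1 = evalWord π p.2)
    (hterm : ∀ f : ℕ → List A, ¬ ∀ n : ℕ, RwStep R (f n) (f (n + 1)))
    (huniq : ∀ g : G, ∃! w : List A, Irred R w ∧ evalWord π w = g) :
    let R' : Set (List A × List A) :=
      {p ∈ R | ∃ (w : List A) (l : A), p.1 = w ++ [l] ∧ Irred R w}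
    (∀ p ∈ R', evalWord π p.1 = evalWord π p.2) ∧
    (∀ f : ℕ → List A, ¬ ∀ n : ℕ, RwStep R' (f n) (f (n + 1))) ∧
    (∀ g : G, ∃! w : List A, Irred R' w ∧ evalWord π w = g) ∧
    (∀ w : List A, Irred R' w ↔ Irred R w) := by
  intro R'
  -- an irreducible word exists (the normal form of `1`), so no left-hand side is empty
  obtain ⟨w₁, ⟨hw₁, -⟩, -⟩ := huniq 1
  have hirred : ∀ w, Irred R' w ↔ Irred R w :=
    fun _ => irred_minimalRules_iff (fst_ne_nil_of_irred hw₁)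
  refine ⟨fun p hp => hrel p (minimalRules_subset hp),
    fun f hf => hterm f fun n => (hf n).mono minimalRules_subset, fun g => ?_, hirred⟩
  simpa only [hirred] using huniq g

/-- Restricting a convergent prefix-rewriting system for a group `G` to the
rules whose left-hand sides are minimally reducible yields a convergent
prefix-rewriting system for `G` with the same irreducible words. -/
theorem cprs_restrict_minimally_reducible {A : Type*} {G : Type*} [Group G]
    [Fintype A] (π : A → G) (R : Set (List A × List A))
    (hrel : ∀ p ∈ R, evalWord π p.1 = evalWord π p.2)
    (hterm : ∀ f : ℕ → List A, ¬ ∀ n : ℕ, RwStep R (f n) (f (n + 1)))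
    (huniq : ∀ g : G, ∃! w : List A, Irred R w ∧ evalWord π w = g) :
    let R' : Set (List A × List A) :=
      {p ∈ R | ∃ (w : List A) (l : A), p.1 = w ++ [l] ∧ Irred R w}
    (∀ p ∈ R', evalWord π p.1 = evalWord π p.2) ∧
    (∀ f : ℕ → List A, ¬ ∀ n : ℕ, RwStep R' (f n) (f (n + 1))) ∧
    (∀ g : G, ∃! w : List A, Irred R' w ∧ evalWord π w = g) ∧
    (∀ w : List A, Irred R' w ↔ Irred R w) :=
  cprs_restrict_minimally_reducible_general π R hrel hterm huniq
end

section
/- If L is a synchronously regular language of pairs of words (i.e., its padded extension L^p is regular) and F is a finite language of pairs of words, then the set L · F = {(u_1 v_1, u_2 v_2) : (u_1, u_2) ∈ L, (v_1, v_2) ∈ F} is synchronously regular. -/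
/-- The padded extension of a pair of words: the shorter component is padded
at the end with the padding symbol `none`. -/
def padPair {A : Type*} (p : List A × List A) : List (Option A × Option A) :=
  (p.1.map some ++ List.replicate (max p.1.length p.2.length - p.1.length) none).zip
    (p.2.map some ++ List.replicate (max p.1.length p.2.length - p.2.length) none)

/-- The padded extension of a language of pairs of words. -/
def padLang {A : Type*} (L : Set (List A × List A)) :
    Language (Option A × Option A) :=
  {w | ∃ p ∈ L, w = padPair p}

/-- A language of pairs is synchronously regular if its padded extension is
accepted by a finite state automaton. -/
def SyncRegular {A : Type*} (L : Set (List A × List A)) : Prop :=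
  ∃ (Q : Type) (_ : Fintype Q) (M : DFA (Option A × Option A) Q),
    M.accepts = padLang L

/-!
Appending a pair `(v₁, v₂)` amounts to appending its letters one at a time, and appending to
the second component is appending to the first one conjugated by swapping the two tracks. To
append a letter `x` to the first component of `(u₁, u₂)`: if `u₁` is the shorter word, the padded
word of `(u₁ ++ [x], u₂)` arises from that of `(u₁, u₂)` by overwriting the first padding symbol
of the first track with `x`, a position an automaton can guess; otherwise it is the padded word
of `(u₁, u₂)`, which has no padding in its first track, followed by `(some x, none)`. Finally,
synchronously regular languages are closed under finite unions.
-/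

namespace List

theorem forall_or_exists_first_not {α : Type*} (p : α → Prop) (l : List α) :
    (∀ a ∈ l, p a) ∨ ∃ z a s, l = z ++ a :: s ∧ (∀ b ∈ z, p b) ∧ ¬p a := by
  induction l with
  | nil => simp
  | cons a l ih =>
    by_cases ha : p a
    · rcases ih with hl | ⟨z, b, s, rfl, hz, hb⟩
      · exact .inl (forall_mem_cons.2 ⟨ha, hl⟩)
      · exact .inr ⟨a :: z, b, s, rfl, forall_mem_cons.2 ⟨ha, hz⟩, hb⟩
    · exact .inr ⟨[], a, l, rfl, by simp, ha⟩

variable {α β : Type*}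

theorem zipWithAll_cons_left {γ : Type*} (f : Option α → Option β → γ) (a : α) (l₁ : List α)
    (l₂ : List β) : zipWithAll f (a :: l₁) l₂ = f (some a) l₂.head? :: zipWithAll f l₁ l₂.tail := by
  cases l₂ <;> simp

variable {x : α} {l₁ : List α} {l₂ : List β}

theorem zipWithAll_append_singleton_of_forall_isSome
    (h : ∀ c ∈ zipWithAll Prod.mk l₁ l₂, c.1.isSome) :
    zipWithAll Prod.mk (l₁ ++ [x]) l₂ = zipWithAll Prod.mk l₁ l₂ ++ [(some x, none)] := by
  induction l₁ generalizing l₂ with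
  | nil => cases l₂ <;> simp_all
  | cons a l₁ ih =>
    rw [zipWithAll_cons_left] at h
    rw [cons_append, zipWithAll_cons_left, zipWithAll_cons_left, ih (forall_mem_cons.1 h).2,
      cons_append]

theorem zipWithAll_append_singleton_of_eq_append {z s : List (Option α × Option β)}
    {b : Option β} (h : zipWithAll Prod.mk l₁ l₂ = z ++ (none, b) :: s)
    (hz : ∀ c ∈ z, c.1.isSome) :
    zipWithAll Prod.mk (l₁ ++ [x]) l₂ = z ++ (some x, b) :: s := by
  induction z generalizing l₁ l₂ with
  | nil => cases l₁ <;> cases l₂ <;> simp_all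
  | cons c z ih =>
    cases l₁ with
    | nil =>
      cases l₂ with
      | nil => simp at h
      | cons b l₂ =>
        obtain ⟨rfl, -⟩ := cons.inj h
        simp at hz
    | cons a l₁ =>
      rw [zipWithAll_cons_left, cons_append, cons.injEq] at h
      rw [cons_append, zipWithAll_cons_left, h.1, ih h.2 (forall_mem_cons.1 hz).2, cons_append]

end List

namespace Language

variable {α : Type*}

def replaceAfterPrefix (p : α → Prop) (R : α → α → Prop) (K : Language α) : Language α :=
  {w | ∃ z a b s, w = z ++ b :: s ∧ (∀ c ∈ z, p c) ∧ R a b ∧ z ++ a :: s ∈ K}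

theorem mem_mul_singleton {K : Language α} {b : α} {w : List α} :
    w ∈ K * {[b]} ↔ ∃ v ∈ K, v ++ [b] = w := by
  simp only [mem_mul]
  exact ⟨fun ⟨v, hv, _, rfl, hw⟩ => ⟨v, hv, hw⟩, fun ⟨v, hv, hw⟩ => ⟨v, hv, _, rfl, hw⟩⟩

theorem isRegular_zero : (0 : Language α).IsRegular :=
  ⟨Unit, inferInstance, ⟨fun _ _ => (), (), ∅⟩, by ext; simp [DFA.mem_accepts]⟩

theorem IsRegular.preimage_map {β : Type*} (f : α → β) {K : Language β} (h : K.IsRegular) :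
    IsRegular (List.map f ⁻¹' K : Language α) := by
  obtain ⟨σ, _, M, rfl⟩ := h
  exact ⟨σ, inferInstance, M.comap f, M.accepts_comap f⟩

theorem isRegular_setOf_forall_mem (p : α → Prop) :
    IsRegular ({w | ∀ a ∈ w, p a} : Language α) := by
  let M : DFA α Prop := ⟨fun b a => b ∧ p a, True, {b | b}⟩
  have hM : ∀ b w, M.evalFrom b w = (b ∧ ∀ a ∈ w, p a) := by
    intro b w
    induction w generalizing b with
    | nil => simp [DFA.evalFrom_nil]
    | cons a w ih => simp [DFA.evalFrom_cons, ih, M, and_assoc]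
  refine ⟨Prop, inferInstance, M, Set.ext fun w => ?_⟩
  change M.evalFrom True w ↔ _
  rw [hM, true_and]
  rfl

theorem IsRegular.mul_singleton {K : Language α} (h : K.IsRegular) (b : α) :
    (K * {[b]}).IsRegular := by
  obtain ⟨σ, _, M, rfl⟩ := h
  let N : DFA α (σ × Prop) :=
    ⟨fun q a => (M.step q.1 a, q.1 ∈ M.accept ∧ a = b), (M.start, False), {q | q.2}⟩
  have hN : ∀ w, (N.eval w).1 = M.eval w := by
    intro w
    induction w using List.reverseRecOn with
    | nil => rfl
    | append_singleton w a ih => simp [DFA.eval_append_singleton, N, ih]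
  refine ⟨σ × Prop, inferInstance, N, ?_⟩
  ext w
  rw [mem_mul_singleton]
  rcases w.eq_nil_or_concat' with rfl | ⟨v, a, rfl⟩
  · simp [DFA.mem_accepts, N]
  · rw [DFA.mem_accepts, DFA.eval_append_singleton]
    change (N.eval v).1 ∈ M.accept ∧ a = b ↔ _
    rw [hN]
    constructor
    · rintro ⟨hv, rfl⟩
      exact ⟨v, hv, rfl⟩
    · rintro ⟨u, hu, huv⟩
      obtain ⟨rfl, hab⟩ := List.append_inj' huv rfl
      exact ⟨hu, by simpa using hab.symm⟩

end Language

namespace DFA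

variable {α σ : Type*} (M : DFA α σ) (p : α → Prop) (R : α → α → Prop)

/-- In a state `.inl q` the replaced letter is still to come; in a state `.inr q` it has been
read. In both, `q` is the state of `M` on the word before the replacement. -/
def replaceAfterPrefixNFA : NFA α (σ ⊕ σ) where
  step
    | .inl q, c => {t | p c ∧ t = .inl (M.step q c) ∨ ∃ a, R a c ∧ t = .inr (M.step q a)}
    | .inr q, c => {.inr (M.step q c)}
  start := {.inl M.start}
  accept := Sum.inr '' M.accept

theorem replaceAfterPrefixNFA_evalFrom_inr (q : σ) (w : List α) :
    (M.replaceAfterPrefixNFA p R).evalFrom {.inr q} w = {.inr (M.evalFrom q w)} := by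
  induction w generalizing q with
  | nil => rfl
  | cons c w ih => rw [NFA.evalFrom_cons, NFA.stepSet_singleton]; exact ih _

theorem inr_mem_replaceAfterPrefixNFA_evalFrom_inl {q q' : σ} {w : List α} :
    .inr q' ∈ (M.replaceAfterPrefixNFA p R).evalFrom {.inl q} w ↔
      ∃ z a b s, w = z ++ b :: s ∧ (∀ c ∈ z, p c) ∧ R a b ∧ q' = M.evalFrom q (z ++ a :: s) := by
  induction w generalizing q with
  | nil => simp
  | cons c w ih =>
    rw [NFA.evalFrom_cons, NFA.stepSet_singleton, NFA.mem_evalFrom_iff_exists]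
    constructor
    · rintro ⟨t, ⟨hc, rfl⟩ | ⟨a, hac, rfl⟩, ht⟩
      · obtain ⟨z, a, b, s, rfl, hz, hab, rfl⟩ := ih.1 ht
        exact ⟨c :: z, a, b, s, rfl, List.forall_mem_cons.2 ⟨hc, hz⟩, hab, rfl⟩
      · rw [replaceAfterPrefixNFA_evalFrom_inr, Set.mem_singleton_iff, Sum.inr.injEq] at ht
        exact ⟨[], a, c, w, rfl, by simp, hac, ht⟩
    · rintro ⟨z, a, b, s, hw, hz, hab, rfl⟩
      rcases z with _ | ⟨d, z⟩
      · obtain ⟨rfl, rfl⟩ := List.cons.inj hw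
        exact ⟨_, .inr ⟨a, hab, rfl⟩, by rw [replaceAfterPrefixNFA_evalFrom_inr]; rfl⟩
      · obtain ⟨rfl, rfl⟩ := List.cons.inj hw
        obtain ⟨hd, hz⟩ := List.forall_mem_cons.1 hz
        exact ⟨_, .inl ⟨hd, rfl⟩, ih.2 ⟨z, a, b, s, rfl, hz, hab, rfl⟩⟩

theorem replaceAfterPrefixNFA_accepts :
    (M.replaceAfterPrefixNFA p R).accepts = M.accepts.replaceAfterPrefix p R := by
  ext w
  rw [NFA.mem_accepts]
  change (∃ t ∈ Sum.inr '' M.accept,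
    t ∈ (M.replaceAfterPrefixNFA p R).evalFrom {.inl M.start} w) ↔ _
  simp only [Set.exists_mem_image, inr_mem_replaceAfterPrefixNFA_evalFrom_inl]
  constructor
  · rintro ⟨q, hq, z, a, b, s, rfl, hz, hab, rfl⟩
    exact ⟨z, a, b, s, rfl, hz, hab, hq⟩
  · rintro ⟨z, a, b, s, rfl, hz, hab, hacc⟩
    exact ⟨_, hacc, z, a, b, s, rfl, hz, hab, rfl⟩

end DFA

theorem Language.IsRegular.replaceAfterPrefix {α : Type*} {K : Language α} (h : K.IsRegular)
    (p : α → Prop) (R : α → α → Prop) : (K.replaceAfterPrefix p R).IsRegular := by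
  obtain ⟨σ, _, M, rfl⟩ := h
  exact ⟨Set (σ ⊕ σ), inferInstance, (M.replaceAfterPrefixNFA p R).toDFA,
    by rw [NFA.toDFA_correct, DFA.replaceAfterPrefixNFA_accepts]⟩

section Padding

variable {A : Type*}

theorem padPair_eq_zipWithAll (l₁ l₂ : List A) :
    padPair (l₁, l₂) = List.zipWithAll Prod.mk l₁ l₂ := by
  induction l₁ generalizing l₂ with
  | nil => induction l₂ <;> simp_all [padPair, List.replicate_succ]
  | cons a l₁ ih =>
    cases l₂ with
    | nil => simpa [padPair, List.replicate_succ] using ih []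
    | cons b l₂ => simpa [padPair, Nat.succ_max_succ] using ih l₂

theorem padPair_swap (p : List A × List A) :
    padPair p.swap = (padPair p).map Prod.swap := by
  simp [padPair, List.zip_swap, max_comm]

theorem padLang_empty : padLang (∅ : Set (List A × List A)) = 0 := by
  ext w
  exact ⟨fun ⟨_, hp, _⟩ => hp.elim, fun h => h.elim⟩

theorem padLang_union (L₁ L₂ : Set (List A × List A)) :
    padLang (L₁ ∪ L₂) = padLang L₁ + padLang L₂ := by
  ext w
  rw [Language.mem_add]
  constructor
  · rintro ⟨p, hp | hp, rfl⟩
    exacts [.inl ⟨p, hp, rfl⟩, .inr ⟨p, hp, rfl⟩]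
  · rintro (⟨p, hp, rfl⟩ | ⟨p, hp, rfl⟩)
    exacts [⟨p, .inl hp, rfl⟩, ⟨p, .inr hp, rfl⟩]

theorem padLang_image_swap (L : Set (List A × List A)) :
    padLang (Prod.swap '' L) = List.map Prod.swap ⁻¹' padLang L := by
  ext w
  constructor
  · rintro ⟨_, ⟨p, hp, rfl⟩, rfl⟩
    exact ⟨p, hp, by rw [padPair_swap, List.map_map, Prod.swap_swap_eq, List.map_id]⟩
  · rintro ⟨p, hp, hw⟩
    refine ⟨p.swap, ⟨p, hp, rfl⟩, ?_⟩
    rw [padPair_swap, ← hw, List.map_map, Prod.swap_swap_eq, List.map_id]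

theorem padLang_image_appendFst_singleton (x : A) (L : Set (List A × List A)) :
    padLang (Prod.map (· ++ [x]) id '' L) =
      (padLang L).replaceAfterPrefix (fun c => c.1.isSome)
          (fun a b => ∃ β, a = (none, β) ∧ b = (some x, β)) +
        (padLang L ⊓ {w | ∀ c ∈ w, c.1.isSome}) * {[(some x, none)]} := by
  ext w
  rw [Language.mem_add, Language.mem_mul_singleton]
  constructor
  · rintro ⟨_, ⟨⟨l₁, l₂⟩, hl, rfl⟩, rfl⟩
    have hpad : List.zipWithAll Prod.mk l₁ l₂ ∈ padLang L :=
      ⟨_, hl, (padPair_eq_zipWithAll _ _).symm⟩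
    simp only [Prod.map_apply, id_eq, padPair_eq_zipWithAll]
    rcases List.forall_or_exists_first_not (fun c => c.1.isSome) (List.zipWithAll Prod.mk l₁ l₂)
      with hall | ⟨z, ⟨_, β⟩, s, hzs, hz, hc⟩
    · exact .inr ⟨_, ⟨hpad, hall⟩,
        (List.zipWithAll_append_singleton_of_forall_isSome hall).symm⟩
    · obtain rfl : _ = none := Option.not_isSome_iff_eq_none.1 hc
      exact .inl ⟨z, _, _, s, List.zipWithAll_append_singleton_of_eq_append hzs hz, hz,
        ⟨β, rfl, rfl⟩, hzs ▸ hpad⟩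
  · rintro (⟨z, _, _, s, rfl, hz, ⟨β, rfl, rfl⟩, ⟨⟨l₁, l₂⟩, hl, h⟩⟩ |
      ⟨_, ⟨⟨⟨l₁, l₂⟩, hl, rfl⟩, hall⟩, rfl⟩)
    · refine ⟨(l₁ ++ [x], l₂), ⟨_, hl, rfl⟩, ?_⟩
      rw [padPair_eq_zipWithAll] at h ⊢
      exact (List.zipWithAll_append_singleton_of_eq_append h.symm hz).symm
    · refine ⟨(l₁ ++ [x], l₂), ⟨_, hl, rfl⟩, ?_⟩
      simp only [padPair_eq_zipWithAll] at hall ⊢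
      exact (List.zipWithAll_append_singleton_of_forall_isSome hall).symm

end Padding

section SyncRegular

variable {A : Type*}

theorem syncRegular_iff_isRegular {L : Set (List A × List A)} :
    SyncRegular L ↔ (padLang L).IsRegular :=
  Iff.rfl

theorem syncRegular_empty : SyncRegular (∅ : Set (List A × List A)) := by
  rw [syncRegular_iff_isRegular, padLang_empty]
  exact Language.isRegular_zero

theorem SyncRegular.union {L₁ L₂ : Set (List A × List A)} (h₁ : SyncRegular L₁)
    (h₂ : SyncRegular L₂) : SyncRegular (L₁ ∪ L₂) := by
  rw [syncRegular_iff_isRegular] at h₁ h₂ ⊢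
  rw [padLang_union]
  exact h₁.add h₂

theorem SyncRegular.biUnion {ι : Type*} {s : Set ι} (hs : s.Finite)
    {L : ι → Set (List A × List A)} (h : ∀ i ∈ s, SyncRegular (L i)) :
    SyncRegular (⋃ i ∈ s, L i) := by
  induction s, hs using Set.Finite.induction_on with
  | empty => simpa using syncRegular_empty
  | insert _ _ ih =>
    rw [Set.biUnion_insert]
    exact (h _ (Set.mem_insert _ _)).union (ih fun i hi => h i (Set.mem_insert_of_mem _ hi))

theorem SyncRegular.image_swap {L : Set (List A × List A)} (h : SyncRegular L) :
    SyncRegular (Prod.swap '' L) := by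
  rw [syncRegular_iff_isRegular] at h ⊢
  rw [padLang_image_swap]
  exact h.preimage_map Prod.swap

theorem SyncRegular.image_appendFst_singleton (x : A) {L : Set (List A × List A)}
    (h : SyncRegular L) : SyncRegular (Prod.map (· ++ [x]) id '' L) := by
  rw [syncRegular_iff_isRegular] at h ⊢
  rw [padLang_image_appendFst_singleton]
  exact (h.replaceAfterPrefix _ _).add
    ((h.inf (Language.isRegular_setOf_forall_mem _)).mul_singleton _)

theorem SyncRegular.image_appendFst (v : List A) {L : Set (List A × List A)}
    (h : SyncRegular L) : SyncRegular (Prod.map (· ++ v) id '' L) := by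
  induction v generalizing L with
  | nil =>
    have hid : Prod.map (fun l : List A => l ++ []) (@id (List A)) = id := by ext <;> simp
    rwa [hid, Set.image_id]
  | cons x v ih =>
    have hcomp : Prod.map (· ++ x :: v) id =
        Prod.map (· ++ v) id ∘ Prod.map (· ++ [x]) (@id (List A)) := by
      ext <;> simp
    rw [hcomp, Set.image_comp]
    exact ih (h.image_appendFst_singleton x)

theorem SyncRegular.image_append (v₁ v₂ : List A) {L : Set (List A × List A)}
    (h : SyncRegular L) : SyncRegular (Prod.map (· ++ v₁) (· ++ v₂) '' L) := by
  have hcomp : Prod.map (· ++ v₁) (· ++ v₂) =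
      Prod.swap ∘ Prod.map (· ++ v₂) id ∘ Prod.swap ∘ Prod.map (· ++ v₁) (@id (List A)) := by
    ext <;> simp
  rw [hcomp, Set.image_comp, Set.image_comp, Set.image_comp]
  exact ((h.image_appendFst v₁).image_swap.image_appendFst v₂).image_swap

end SyncRegular

theorem syncRegular_concat_finite_general {A : Type*}
    (L F : Set (List A × List A)) (hL : SyncRegular L) (hF : F.Finite) :
    SyncRegular {q : List A × List A |
      ∃ p ∈ L, ∃ f ∈ F, q = (p.1 ++ f.1, p.2 ++ f.2)} := by
  have hunion : {q : List A × List A | ∃ p ∈ L, ∃ f ∈ F, q = (p.1 ++ f.1, p.2 ++ f.2)} =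
      ⋃ f ∈ F, Prod.map (· ++ f.1) (· ++ f.2) '' L := by
    ext q
    simp only [Set.mem_iUnion, Set.mem_image, Prod.map]
    constructor
    · rintro ⟨p, hp, f, hf, rfl⟩
      exact ⟨f, hf, p, hp, rfl⟩
    · rintro ⟨f, hf, p, hp, rfl⟩
      exact ⟨p, hp, f, hf, rfl⟩
  rw [hunion]
  exact SyncRegular.biUnion hF fun f _ => hL.image_append f.1 f.2

/-- Synchronously regular languages of pairs are closed under concatenation
on the right by a finite language of pairs. -/
theorem syncRegular_concat_finite {A : Type*} [Fintype A]
    (L F : Set (List A × List A)) (hL : SyncRegular L) (hF : F.Finite) :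
    SyncRegular {q : List A × List A |
      ∃ p ∈ L, ∃ f ∈ F, q = (p.1 ++ f.1, p.2 ++ f.2)} :=
  syncRegular_concat_finite_general L F hL hF
end
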